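/- The numerical semigroup Γ generated by 6 and 43 satisfies the semigroup distribution property for d = 16: for every integer l ≥ 1 the half-open interval (16(l − 1), 16l] contains exactly min(l + 1, 16) elements of Γ. -/

import Mathlib

/-- `Γ` satisfies the semigroup distribution property for `d`: for every
`l ≥ 1` the half-open interval `((l−1)d, ld]` contains exactly
`min (l+1) d` elements of `Γ`. -/
def SemigroupDistributionProperty (Γ : Set ℕ) (d : ℕ) : Prop :=
  ∀ l : ℕ, 1 ≤ l →
    {k : ℕ | k ∈ Γ ∧ (l - 1) * d < k ∧ k ≤ l * d}.ncard = min (l + 1) d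

/-! By the Chicken McNugget theorem `⟨6, 43⟩` contains every `n ≥ (6 - 1)(43 - 1) = 210`, so
from `l = 15` on every interval `((l - 1)16, 16l]` lies in the semigroup and contains `16`
elements. The intervals for `l ≤ 14` are counted by a decision procedure, after reducing
membership in `⟨a, b⟩` to finitely many divisibility tests. -/

namespace Nat

theorem exists_eq_mul_add_mul_of_coprime_of_lt {a b n : ℕ} (cop : Coprime a b) (ha : 1 < a)
    (hb : 1 < b) (hn : a * b - a - b < n) : ∃ x y : ℕ, n = x * a + y * b := by
  obtain ⟨x, y, hxy⟩ :=
    (AddSubmonoid.mem_closure_pair a b n).mp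
      ((frobeniusNumber_iff.mp (frobeniusNumber_pair cop ha hb)).2 n hn)
  exact ⟨x, y, by simpa [smul_eq_mul, eq_comm] using hxy⟩

/-- Reducing `y` modulo `a` leaves only `a` candidates for the coefficient of `b`. -/
theorem exists_eq_mul_add_mul_iff {a b n : ℕ} (ha : 0 < a) :
    (∃ x y : ℕ, n = x * a + y * b) ↔ ∃ y < a, y * b ≤ n ∧ a ∣ n - y * b := by
  constructor
  · rintro ⟨x, y, rfl⟩
    refine ⟨y % a, Nat.mod_lt y ha, ?_, ⟨x + y / a * b, ?_⟩⟩
    · exact (Nat.mul_le_mul_right b (Nat.mod_le y a)).trans (Nat.le_add_left _ _)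
    · have hy : y * b = a * (y / a) * b + y % a * b := by rw [← add_mul, Nat.div_add_mod]
      rw [hy, ← add_assoc, Nat.add_sub_cancel]
      ring
  · rintro ⟨y, -, hle, c, hc⟩
    exact ⟨c, y, by rw [mul_comm c a]; omega⟩

end Nat

theorem Set.ncard_setOf_mem_and_mem_Ioc_eq_card_filter (Γ : Set ℕ) (p : ℕ → Prop)
    [DecidablePred p] (hp : ∀ n, n ∈ Γ ↔ p n) (a b : ℕ) :
    {k | k ∈ Γ ∧ a < k ∧ k ≤ b}.ncard = ((Finset.Ioc a b).filter p).card := by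
  rw [← Set.ncard_coe_finset]
  congr 1
  ext k
  simp [hp, and_comm]

theorem Set.ncard_setOf_mem_and_mem_Ioc_of_forall_le_mem {Γ : Set ℕ} {c : ℕ}
    (hΓ : ∀ n, c ≤ n → n ∈ Γ) {a : ℕ} (hc : c ≤ a + 1) (b : ℕ) :
    {k | k ∈ Γ ∧ a < k ∧ k ≤ b}.ncard = b - a := by
  rw [← Set.ncard_Ioc_nat]
  congr 1
  ext k
  simp only [Set.mem_ofPred_eq, Set.mem_Ioc, and_iff_right_iff_imp]
  exact fun h => hΓ k (by omega)

/-- The sporadic case (f): the semigroup `⟨6, 43⟩` of the cusp of the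
Orevkov–Artal Bartolo curve of degree 16 satisfies the semigroup distribution
property for `d = 16`. -/
theorem distribution_property_case_f :
    SemigroupDistributionProperty
      {n : ℕ | ∃ x y : ℕ, n = x * 6 + y * 43} 16 := by
  have hconductor : ∀ n, 210 ≤ n → n ∈ {n : ℕ | ∃ x y : ℕ, n = x * 6 + y * 43} := fun n hn =>
    Nat.exists_eq_mul_add_mul_of_coprime_of_lt (by norm_num) (by norm_num) (by norm_num)
      (by omega)
  have hmem : ∀ n, n ∈ {n : ℕ | ∃ x y : ℕ, n = x * 6 + y * 43} ↔
      ∃ y < 6, y * 43 ≤ n ∧ 6 ∣ n - y * 43 := fun n =>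
    Nat.exists_eq_mul_add_mul_iff (by norm_num)
  intro l hl
  rcases le_or_gt l 14 with hsmall | hlarge
  · rw [Set.ncard_setOf_mem_and_mem_Ioc_eq_card_filter _ _ hmem]
    interval_cases l <;> decide
  · rw [Set.ncard_setOf_mem_and_mem_Ioc_of_forall_le_mem hconductor (by omega)]
    omega
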